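/- For a metric space X, functions f, g : X → [−∞,∞], ρ ≥ 0, δ ∈ [−ρ,ρ], and ε > δ + exs(epi g ∩ B_{X×ℝ}(ρ); epi f): the level sets satisfy exs(lev_δ g ∩ B_X(ρ); lev_ε f) ≤ exs(epi g ∩ B_{X×ℝ}(ρ); epi f) ≤ dl_ρ(epi f, epi g). -/

import Mathlib

open Set Filter Metric ENNReal Pointwise Classical

noncomputable section

/-- Excess of `A` over `B`: `sup_{x ∈ A} dist(x,B)`, valued in `ℝ≥0∞`
(so it is `0` when `A = ∅` and `∞` when `A ≠ ∅`, `B = ∅`). -/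
def exs {X : Type*} [PseudoEMetricSpace X] (A B : Set X) : ℝ≥0∞ :=
  ⨆ x ∈ A, EMetric.infEdist x B

/-- Truncated Hausdorff distance with centroid `c` and radius `ρ`. -/
def dl {X : Type*} [PseudoEMetricSpace X] (c : X) (ρ : ℝ≥0∞) (A B : Set X) : ℝ≥0∞ :=
  max (exs (A ∩ EMetric.closedBall c ρ) B) (exs (B ∩ EMetric.closedBall c ρ) A)

/-- Epigraph of an extended-real-valued function. -/
def epi {X : Type*} (f : X → EReal) : Set (X × ℝ) :=
  {p | f p.1 ≤ (p.2 : EReal)}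

/-- Absolute difference of extended reals, valued in `ℝ≥0∞`. -/
def eAbsDiff (a b : EReal) : ℝ≥0∞ :=
  sInf {ε : ℝ≥0∞ | a ≤ b + (ε : EReal) ∧ b ≤ a + (ε : EReal)}

/-!
A point `(x, δ)` of `epi g` lies within `exs(epi g ∩ B(ρ); epi f) < ε - δ` of some `(y, β) ∈ epi f`.
Then `|β - δ| < ε - δ` forces `f y ≤ β < ε`, so `y ∈ lev_ε f` and `d(x, y) ≤ d((x, δ), (y, β))`.
-/

lemma infEDist_le_exs {X : Type*} [PseudoEMetricSpace X] {A B : Set X} {x : X} (hx : x ∈ A) :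
    Metric.infEDist x B ≤ exs A B :=
  le_iSup₂_of_le x hx le_rfl

lemma exs_le_dl {X : Type*} [PseudoEMetricSpace X] (c : X) (ρ : ℝ≥0∞) (A B : Set X) :
    exs (B ∩ Metric.closedEBall c ρ) A ≤ dl c ρ A B :=
  le_max_right _ _

lemma mk_mem_closedEBall_prod {X : Type*} [PseudoMetricSpace X] {c x : X} {ρ δ : ℝ}
    (hx : x ∈ Metric.closedBall c ρ) (hδ : |δ| ≤ ρ) :
    (x, δ) ∈ Metric.closedEBall (c, (0 : ℝ)) (ENNReal.ofReal ρ) := by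
  rw [Metric.mem_closedEBall, Prod.edist_eq, edist_dist, edist_dist, Real.dist_eq, sub_zero]
  exact max_le (ENNReal.ofReal_le_ofReal hx) (ENNReal.ofReal_le_ofReal hδ)

lemma mem_levelSet_of_mem_epi_of_edist_lt {X : Type*} {f : X → EReal} {y : X} {β δ ε : ℝ}
    (hy : (y, β) ∈ epi f) (hβ : edist δ β < ENNReal.ofReal (ε - δ)) :
    f y ≤ (ε : EReal) := by
  rw [edist_dist, ENNReal.ofReal_lt_ofReal_iff', Real.dist_eq] at hβ
  have hβε : β ≤ ε := by linarith [(abs_lt.mp hβ.1).1]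
  exact hy.trans (EReal.coe_le_coe_iff.mpr hβε)

lemma infEDist_levelSet_le_infEDist_epi {X : Type*} [PseudoMetricSpace X] {f : X → EReal}
    {x : X} {δ ε : ℝ} (h : Metric.infEDist (x, δ) (epi f) < ENNReal.ofReal (ε - δ)) :
    Metric.infEDist x {y | f y ≤ (ε : EReal)} ≤ Metric.infEDist (x, δ) (epi f) := by
  refine le_of_forall_gt fun t ht => ?_
  obtain ⟨⟨y, β⟩, hy, hdist⟩ := Metric.infEDist_lt_iff.mp (lt_min ht h)
  rw [Prod.edist_eq, max_lt_iff, lt_min_iff, lt_min_iff] at hdist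
  have hyε : f y ≤ (ε : EReal) := mem_levelSet_of_mem_epi_of_edist_lt hy hdist.2.2
  exact (Metric.infEDist_le_edist_of_mem (s := {y | f y ≤ (ε : EReal)}) hyε).trans_lt hdist.1.1

theorem stmt10_general {X : Type*} [MetricSpace X] (c : X) (f g : X → EReal) (ρ δ ε : ℝ)
    (hδ : -ρ ≤ δ) (hδ' : δ ≤ ρ)
    (hε : ENNReal.ofReal (ε - δ) >
      exs (epi g ∩ EMetric.closedBall (c, (0 : ℝ)) (ENNReal.ofReal ρ)) (epi f)) :
    exs ({x | g x ≤ ((δ : ℝ) : EReal)} ∩ Metric.closedBall c ρ) {x | f x ≤ ((ε : ℝ) : EReal)}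
      ≤ exs (epi g ∩ EMetric.closedBall (c, (0 : ℝ)) (ENNReal.ofReal ρ)) (epi f)
    ∧ exs (epi g ∩ EMetric.closedBall (c, (0 : ℝ)) (ENNReal.ofReal ρ)) (epi f)
      ≤ dl (c, (0 : ℝ)) (ENNReal.ofReal ρ) (epi f) (epi g) := by
  refine ⟨iSup₂_le fun x ⟨hgx, hx⟩ => ?_, exs_le_dl _ _ _ _⟩
  have hmem : (x, δ) ∈ epi g ∩ Metric.closedEBall (c, (0 : ℝ)) (ENNReal.ofReal ρ) :=
    ⟨hgx, mk_mem_closedEBall_prod hx (abs_le.mpr ⟨hδ, hδ'⟩)⟩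
  have hexs := infEDist_le_exs (B := epi f) hmem
  exact (infEDist_levelSet_le_infEDist_epi (hexs.trans_lt hε)).trans hexs

/-- approximation of level sets. -/
theorem stmt10 {X : Type*} [MetricSpace X] (c : X) (f g : X → EReal) (ρ δ ε : ℝ)
    (hρ : 0 ≤ ρ) (hδ : -ρ ≤ δ) (hδ' : δ ≤ ρ)
    (hε : ENNReal.ofReal (ε - δ) >
      exs (epi g ∩ EMetric.closedBall (c, (0 : ℝ)) (ENNReal.ofReal ρ)) (epi f)) :
    exs ({x | g x ≤ ((δ : ℝ) : EReal)} ∩ Metric.closedBall c ρ) {x | f x ≤ ((ε : ℝ) : EReal)}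
      ≤ exs (epi g ∩ EMetric.closedBall (c, (0 : ℝ)) (ENNReal.ofReal ρ)) (epi f)
    ∧ exs (epi g ∩ EMetric.closedBall (c, (0 : ℝ)) (ENNReal.ofReal ρ)) (epi f)
      ≤ dl (c, (0 : ℝ)) (ENNReal.ofReal ρ) (epi f) (epi g) :=
  stmt10_general c f g ρ δ ε hδ hδ' hε
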